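/- Lower bound on the Wehrl entropy for arbitrary spin: for every n ∈ ℕ and every unit vector ψ ∈ ℂ^(n+1), the Wehrl entropy satisfies S_W(ψ) ≥ ln( (2n+1)/(n+1) ) > 0 (for n ≥ 1). -/

import Mathlib

open MeasureTheory

/-- The Bloch coherent state of spin `n/2` with parameters `Ω = (p, φ)`:
components `(v_n(Ω))_k = √(binom n k) · p^(k/2) · (1-p)^((n-k)/2) · exp(-i k φ)`. -/
noncomputable def bloch (n : ℕ) (Ω : ℝ × ℝ) : EuclideanSpace ℂ (Fin (n + 1)) :=
  WithLp.toLp 2 fun k => (↑(Real.sqrt (n.choose k) * Real.sqrt Ω.1 ^ (k : ℕ) *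
      Real.sqrt (1 - Ω.1) ^ (n - (k : ℕ))) : ℂ) *
    Complex.exp (-((k : ℕ) : ℂ) * Complex.I * (Ω.2 : ℂ))

/-- A sphere point: `(p, φ) ∈ [0,1] × [0, 2π)`. -/
def IsSpherePt (Ω : ℝ × ℝ) : Prop :=
  Ω.1 ∈ Set.Icc (0 : ℝ) 1 ∧ Ω.2 ∈ Set.Ico (0 : ℝ) (2 * Real.pi)

/-- The overlap `⟨v_n(Ω), ψ⟩` (inner product conjugate-linear in the first argument). -/
noncomputable def ov (n : ℕ) (Ω : ℝ × ℝ) (ψ : EuclideanSpace ℂ (Fin (n + 1))) : ℂ :=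
  inner ℂ (bloch n Ω) ψ

/-- Normalized integral over the sphere: `∫ f(Ω) dΩ/4π = ∫_0^1 ∫_0^{2π} f(p,φ) dφ/(2π) dp`. -/
noncomputable def sphereInt (f : ℝ × ℝ → ℝ) : ℝ :=
  ∫ p in (0 : ℝ)..1, (∫ φ in (0 : ℝ)..(2 * Real.pi), f (p, φ)) / (2 * Real.pi)

/-- The Wehrl entropy of a state `ψ ∈ ℂ^(n+1)`. -/
noncomputable def wehrl (n : ℕ) (ψ : EuclideanSpace ℂ (Fin (n + 1))) : ℝ :=
  -((n : ℝ) + 1) * sphereInt (fun Ω => ‖ov n Ω ψ‖ ^ 2 * Real.log (‖ov n Ω ψ‖ ^ 2))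

/-- `ψ` is represented by the `n` sphere points `ω 1, …, ω n` with constant `c`:
`|⟨v_n(Ω), ψ⟩|² = c · ∏ k, |⟨v_1(Ω), v_1(ω k)⟩|²` for every sphere point `Ω`. -/
def Represents (n : ℕ) (ψ : EuclideanSpace ℂ (Fin (n + 1))) (ω : Fin n → ℝ × ℝ) (c : ℝ) :
    Prop :=
  (∀ k, IsSpherePt (ω k)) ∧
    ∀ Ω, IsSpherePt Ω → ‖ov n Ω ψ‖ ^ 2 = c * ∏ k : Fin n, ‖ov 1 Ω (bloch 1 (ω k))‖ ^ 2

/-- Squared chordal distance between two sphere points (sphere of radius 1/2):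
`d(ω, ω') = 1 - |⟨v_1(ω), v_1(ω')⟩|²`. -/
noncomputable def chord (ω ω' : ℝ × ℝ) : ℝ := 1 - ‖ov 1 ω (bloch 1 ω')‖ ^ 2

/-- `ψ` is a coherent state, i.e. `ψ = e^{iθ} v_n(Ω)` for some `θ` and some sphere point `Ω`. -/
def IsCoherent (n : ℕ) (ψ : EuclideanSpace ℂ (Fin (n + 1))) : Prop :=
  ∃ (θ : ℝ) (Ω : ℝ × ℝ), IsSpherePt Ω ∧ ψ = Complex.exp ((θ : ℂ) * Complex.I) • bloch n Ω

open Polynomial Finset Complex ComplexConjugate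
open scoped Real

/-!
Write `F(Ω) = |⟨v_n(Ω), ψ⟩|²` and let `Q = ∑ₖ √(n choose k) ψₖ Xᵏ` be the Majorana polynomial of
`ψ`. The overlap `⟨v_n(p, φ), ψ⟩` is the degree-`n` homogenization of `Q` evaluated at
`(√p e^{iφ}, √(1-p))`. For a homogenization of degree `m`, Parseval's identity in `φ` and the Beta
integral in `p` turn the sphere average of its squared modulus into `[Q]²_m / (m + 1)`, where
`[Q]²_m = ∑ₖ |Qₖ|² / (m choose k)` is the Bombieri norm. Since `F²` comes in the same way from `Q²`
in degree `2n`, and `[Q²]_{2n} ≤ [Q]_n² = ‖ψ‖²` by Cauchy–Schwarz and Vandermonde's identity,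
`∫ F = 1/(n+1)` and `∫ F² ≤ 1/(2n+1)`. Jensen's inequality for the concave `log`, with respect to
the probability density `(n+1) F`, then gives `S_W = -(n+1) ∫ F log F ≥ -log((n+1) ∫ F²)`.
-/

theorem integral_exp_int_mul_I (m : ℤ) :
    ∫ φ in (0 : ℝ)..2 * π, cexp (m * I * φ) = if m = 0 then (2 * π : ℂ) else 0 := by
  split_ifs with hm
  · simp [hm]
  · have hc : (m : ℂ) * I ≠ 0 := by simp [hm]
    rw [integral_exp_mul_complex hc, ofReal_zero, mul_zero, exp_zero,
      show (m : ℂ) * I * ((2 * π : ℝ) : ℂ) = m * (2 * π * I) by push_cast; ring,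
      exp_int_mul_two_pi_mul_I, sub_self, zero_div]

theorem integral_norm_sq_eval_exp (P : ℂ[X]) {M : ℕ} (hM : P.natDegree < M) :
    ∫ φ in (0 : ℝ)..2 * π, ‖P.eval (cexp (I * φ))‖ ^ 2 =
      2 * π * ∑ k ∈ range M, ‖P.coeff k‖ ^ 2 := by
  have hexpand (φ : ℝ) : ((‖P.eval (cexp (I * φ))‖ ^ 2 : ℝ) : ℂ) =
      ∑ j ∈ range M, ∑ k ∈ range M,
        P.coeff j * conj (P.coeff k) * cexp (((j - k : ℤ) : ℂ) * I * φ) := by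
    rw [ofReal_pow, ← mul_conj', eval_eq_sum_range' hM, map_sum, sum_mul_sum]
    refine sum_congr rfl fun j _ => sum_congr rfl fun k _ => ?_
    rw [map_mul, map_pow, ← exp_conj, mul_mul_mul_comm, ← exp_nat_mul, ← exp_nat_mul,
      ← exp_add]
    congr 2
    simp only [map_mul, conj_I, conj_ofReal]
    push_cast
    ring
  have hint (j k : ℕ) : IntervalIntegrable (fun φ : ℝ => P.coeff j * conj (P.coeff k) *
      cexp (((j - k : ℤ) : ℂ) * I * φ)) volume 0 (2 * π) :=
    (by fun_prop : Continuous _).intervalIntegrable _ _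
  apply ofReal_injective
  rw [← intervalIntegral.integral_ofReal, intervalIntegral.integral_congr fun φ _ => hexpand φ,
    intervalIntegral.integral_finsetSum fun j _ =>
      (by fun_prop : Continuous _).intervalIntegrable _ _]
  simp_rw [intervalIntegral.integral_finsetSum fun k _ => hint _ k,
    intervalIntegral.integral_const_mul, integral_exp_int_mul_I, sub_eq_zero, Nat.cast_inj,
    mul_ite, mul_zero, sum_ite_eq, mem_range]
  push_cast
  rw [mul_sum]
  refine sum_congr rfl fun k hk => ?_
  rw [if_pos (mem_range.mp hk), mul_conj']
  ring

theorem integral_pow_mul_one_sub_pow {k m : ℕ} (hk : k ≤ m) :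
    ∫ x in (0 : ℝ)..1, x ^ k * (1 - x) ^ (m - k) = 1 / ((m + 1) * m.choose k) := by
  obtain ⟨j, rfl⟩ := Nat.exists_eq_add_of_le hk
  have hβ := Complex.betaIntegral_eq_Gamma_mul_div (k + 1) (j + 1)
    (by norm_cast; omega) (by norm_cast; omega)
  rw [show (k + 1 + (j + 1) : ℂ) = ((k + j + 1 : ℕ) : ℂ) + 1 by push_cast; ring,
    Gamma_nat_eq_factorial, Gamma_nat_eq_factorial, Gamma_nat_eq_factorial, betaIntegral] at hβ
  simp only [add_sub_cancel_right] at hβ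
  have hcongr : ∀ x ∈ Set.uIcc (0 : ℝ) 1,
      (x : ℂ) ^ (k : ℂ) * (1 - (x : ℂ)) ^ (j : ℂ) = ((x ^ k * (1 - x) ^ j : ℝ) : ℂ) := by
    intro x _
    push_cast
    simp only [cpow_natCast]
  rw [intervalIntegral.integral_congr hcongr, intervalIntegral.integral_ofReal] at hβ
  apply ofReal_injective
  rw [Nat.add_sub_cancel_left, hβ, Nat.cast_add_choose, Nat.factorial_succ]
  push_cast
  field_simp

theorem sum_range_sum_antidiagonal_mul {R : Type*} [CommSemiring R] {m m' : ℕ} {f g : ℕ → R}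
    (hf : ∀ j, m < j → f j = 0) (hg : ∀ l, m' < l → g l = 0) :
    ∑ s ∈ range (m + m' + 1), ∑ x ∈ antidiagonal s, f x.1 * g x.2 =
      (∑ j ∈ range (m + 1), f j) * ∑ l ∈ range (m' + 1), g l := by
  have hpoly {h : ℕ → R} {d : ℕ} (hh : ∀ j, d < j → h j = 0) :
      ∃ H : R[X], H.natDegree ≤ d ∧ (∀ j, H.coeff j = h j) ∧
        H.eval 1 = ∑ j ∈ range (d + 1), h j := by
    refine ⟨∑ j ∈ range (d + 1), monomial j (h j), natDegree_sum_le_of_forall_le _ _ fun j hj =>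
      (natDegree_monomial_le _).trans (Nat.lt_succ_iff.mp (mem_range.mp hj)), fun j => ?_, ?_⟩
    · simp only [finsetSum_coeff, coeff_monomial, sum_ite_eq', mem_range]
      split_ifs with hj
      · rfl
      · exact (hh j (by omega)).symm
    · simp [eval_finsetSum]
  obtain ⟨F, hFdeg, hFcoeff, hF1⟩ := hpoly hf
  obtain ⟨G, hGdeg, hGcoeff, hG1⟩ := hpoly hg
  have hdeg : (F * G).natDegree < m + m' + 1 :=
    Nat.lt_succ_of_le (natDegree_mul_le.trans (add_le_add hFdeg hGdeg))
  rw [← hF1, ← hG1]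
  simp_rw [← hFcoeff, ← hGcoeff, ← coeff_mul, ← eval_mul, eval_eq_sum_range' hdeg, one_pow,
    mul_one]

noncomputable def bombieriNormSq (m : ℕ) (P : ℂ[X]) : ℝ :=
  ∑ k ∈ range (m + 1), ‖P.coeff k‖ ^ 2 / m.choose k

theorem norm_coeff_mul_sq_le {m m' : ℕ} {P Q : ℂ[X]} (hP : P.natDegree ≤ m)
    (hQ : Q.natDegree ≤ m') (s : ℕ) :
    ‖(P * Q).coeff s‖ ^ 2 ≤ (m + m').choose s *
      ∑ x ∈ antidiagonal s,
        ‖P.coeff x.1‖ ^ 2 / m.choose x.1 * (‖Q.coeff x.2‖ ^ 2 / m'.choose x.2) := by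
  have htri : ‖(P * Q).coeff s‖ ≤ ∑ x ∈ antidiagonal s, ‖P.coeff x.1‖ * ‖Q.coeff x.2‖ := by
    rw [coeff_mul]
    exact (norm_sum_le _ _).trans (sum_le_sum fun x _ => norm_mul_le _ _)
  have hweights :
      ∑ x ∈ antidiagonal s, (m.choose x.1 * m'.choose x.2 : ℝ) = (m + m').choose s := by
    rw [Nat.add_choose_eq]
    push_cast
    rfl
  have hvanish {R : ℂ[X]} {d j : ℕ} (hR : R.natDegree ≤ d) (hj : d.choose j = 0) : R.coeff j = 0 :=
    coeff_eq_zero_of_natDegree_lt (hR.trans_lt (Nat.choose_eq_zero_iff.mp hj))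
  calc ‖(P * Q).coeff s‖ ^ 2 ≤ (∑ x ∈ antidiagonal s, ‖P.coeff x.1‖ * ‖Q.coeff x.2‖) ^ 2 := by
        gcongr
    _ ≤ _ := by
      rw [← hweights]
      refine sum_sq_le_sum_mul_sum_of_sq_le_mul _ (fun _ _ => by positivity)
        (fun _ _ => by positivity) fun x _ => ?_
      by_cases h1 : m.choose x.1 = 0
      · simp [hvanish hP h1]
      by_cases h2 : m'.choose x.2 = 0
      · simp [hvanish hQ h2]
      exact le_of_eq (by field_simp)

theorem bombieriNormSq_mul_le {m m' : ℕ} {P Q : ℂ[X]} (hP : P.natDegree ≤ m)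
    (hQ : Q.natDegree ≤ m') :
    bombieriNormSq (m + m') (P * Q) ≤ bombieriNormSq m P * bombieriNormSq m' Q := by
  unfold bombieriNormSq
  -- the terms with `j > m` or `l > m'` vanish because `x / 0 = 0`
  rw [← sum_range_sum_antidiagonal_mul (f := fun j => ‖P.coeff j‖ ^ 2 / m.choose j)
    (g := fun l => ‖Q.coeff l‖ ^ 2 / m'.choose l)
    (fun j hj => by simp [Nat.choose_eq_zero_of_lt hj])
    (fun l hl => by simp [Nat.choose_eq_zero_of_lt hl])]
  refine sum_le_sum fun s hs => ?_
  rw [div_le_iff₀' (by exact_mod_cast Nat.choose_pos (Nat.lt_succ_iff.mp (mem_range.mp hs)))]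
  exact norm_coeff_mul_sq_le hP hQ s

noncomputable def homogenizeOnLine (m : ℕ) (a b : ℂ) (Q : ℂ[X]) : ℂ[X] :=
  MvPolynomial.aeval ![C a * X, C b] (Q.homogenize m)

theorem homogenizeOnLine_eq_sum (m : ℕ) (a b : ℂ) (Q : ℂ[X]) :
    homogenizeOnLine m a b Q =
      ∑ k ∈ range (m + 1), C (Q.coeff k * a ^ k * b ^ (m - k)) * X ^ k := by
  rw [homogenizeOnLine, homogenize, map_sum, Nat.sum_antidiagonal_eq_sum_range_succ_mk]
  refine sum_congr rfl fun k _ => ?_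
  rw [MvPolynomial.aeval_monomial, Finsupp.prod_fintype _ _ (by simp)]
  simp only [algebraMap_eq, Finsupp.coe_update, Fin.prod_univ_two, Matrix.cons_val_zero,
    Matrix.cons_val_one, Matrix.cons_val_fin_one, ne_eq, zero_ne_one, not_false_eq_true,
    Function.update_of_ne, Function.update_self, Finsupp.single_eq_same, mul_pow, map_mul,
    map_pow]
  ring

theorem natDegree_homogenizeOnLine_le (m : ℕ) (a b : ℂ) (Q : ℂ[X]) :
    (homogenizeOnLine m a b Q).natDegree ≤ m := by
  rw [homogenizeOnLine_eq_sum]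
  exact natDegree_sum_le_of_forall_le _ _ fun k hk =>
    (natDegree_C_mul_X_pow_le _ _).trans (Nat.lt_succ_iff.mp (mem_range.mp hk))

theorem coeff_homogenizeOnLine {m k : ℕ} (a b : ℂ) (Q : ℂ[X]) (hk : k ≤ m) :
    (homogenizeOnLine m a b Q).coeff k = Q.coeff k * a ^ k * b ^ (m - k) := by
  simp only [homogenizeOnLine_eq_sum, finsetSum_coeff, coeff_C_mul_X_pow, sum_ite_eq, mem_range,
    if_pos (Nat.lt_succ_of_le hk)]

theorem homogenizeOnLine_mul {m m' : ℕ} (a b : ℂ) {P Q : ℂ[X]} (hP : P.natDegree ≤ m)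
    (hQ : Q.natDegree ≤ m') :
    homogenizeOnLine (m + m') a b (P * Q) =
      homogenizeOnLine m a b P * homogenizeOnLine m' a b Q := by
  rw [homogenizeOnLine, homogenize_mul _ _ hP hQ, map_mul]
  rfl

theorem sphereInt_norm_sq_homogenizeOnLine (m : ℕ) (Q : ℂ[X]) :
    sphereInt (fun Ω => ‖(homogenizeOnLine m √Ω.1 √(1 - Ω.1) Q).eval (cexp (I * Ω.2))‖ ^ 2) =
      bombieriNormSq m Q / (m + 1) := by
  have hcircle : ∀ p ∈ Set.uIcc (0 : ℝ) 1,
      (∫ φ in (0 : ℝ)..2 * π, ‖(homogenizeOnLine m √p √(1 - p) Q).eval (cexp (I * φ))‖ ^ 2) /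
        (2 * π) = ∑ k ∈ range (m + 1), ‖Q.coeff k‖ ^ 2 * (p ^ k * (1 - p) ^ (m - k)) := by
    intro p hp
    rw [Set.uIcc_of_le zero_le_one] at hp
    rw [integral_norm_sq_eval_exp _ (Nat.lt_succ_of_le (natDegree_homogenizeOnLine_le ..)),
      mul_div_cancel_left₀ _ (by positivity)]
    refine sum_congr rfl fun k hk => ?_
    rw [coeff_homogenizeOnLine _ _ _ (Nat.lt_succ_iff.mp (mem_range.mp hk))]
    simp only [norm_mul, norm_pow, norm_real, Real.norm_eq_abs, mul_pow, pow_right_comm _ _ 2,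
      sq_abs, Real.sq_sqrt hp.1, Real.sq_sqrt (sub_nonneg.2 hp.2)]
    ring
  rw [sphereInt, intervalIntegral.integral_congr hcircle,
    intervalIntegral.integral_finsetSum fun k _ =>
      (by fun_prop : Continuous _).intervalIntegrable _ _, bombieriNormSq, sum_div]
  refine sum_congr rfl fun k hk => ?_
  rw [intervalIntegral.integral_const_mul,
    integral_pow_mul_one_sub_pow (Nat.lt_succ_iff.mp (mem_range.mp hk))]
  field_simp

noncomputable def majoranaPoly (n : ℕ) (ψ : EuclideanSpace ℂ (Fin (n + 1))) : ℂ[X] :=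
  ∑ k : Fin (n + 1), C (√(n.choose k) * ψ k) * X ^ (k : ℕ)

section Overlap

variable {n : ℕ} (ψ : EuclideanSpace ℂ (Fin (n + 1)))

theorem natDegree_majoranaPoly_le : (majoranaPoly n ψ).natDegree ≤ n :=
  natDegree_sum_le_of_forall_le _ _ fun k _ =>
    (natDegree_C_mul_X_pow_le _ _).trans (Nat.lt_succ_iff.mp k.isLt)

theorem coeff_majoranaPoly (k : Fin (n + 1)) :
    (majoranaPoly n ψ).coeff k = √(n.choose k) * ψ k := by
  simp only [majoranaPoly, finsetSum_coeff, coeff_C_mul_X_pow, Fin.val_inj, sum_ite_eq,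
    mem_univ, if_true]

theorem bombieriNormSq_majoranaPoly : bombieriNormSq n (majoranaPoly n ψ) = ‖ψ‖ ^ 2 := by
  rw [bombieriNormSq, EuclideanSpace.norm_sq_eq,
    ← Fin.sum_univ_eq_sum_range (fun k => ‖(majoranaPoly n ψ).coeff k‖ ^ 2 / n.choose k)]
  refine sum_congr rfl fun k _ => ?_
  have hk : (0 : ℝ) < n.choose k := by exact_mod_cast Nat.choose_pos (Nat.lt_succ_iff.mp k.isLt)
  rw [coeff_majoranaPoly, norm_mul, norm_real, Real.norm_eq_abs, mul_pow, sq_abs,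
    Real.sq_sqrt hk.le, mul_div_cancel_left₀ _ hk.ne']

theorem ov_eq_eval_homogenizeOnLine (Ω : ℝ × ℝ) :
    ov n Ω ψ = (homogenizeOnLine n √Ω.1 √(1 - Ω.1) (majoranaPoly n ψ)).eval (cexp (I * Ω.2)) := by
  rw [homogenizeOnLine_eq_sum, eval_finsetSum, ov, PiLp.inner_apply, ← Fin.sum_univ_eq_sum_range]
  refine sum_congr rfl fun k _ => ?_
  rw [RCLike.inner_apply, coeff_majoranaPoly, bloch]
  simp only [eval_mul, eval_C, eval_pow, eval_X, map_mul, conj_ofReal, ← exp_conj, map_neg,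
    conj_I, conj_natCast, ← exp_nat_mul]
  push_cast
  ring_nf

theorem continuous_ov : Continuous fun Ω => ov n Ω ψ := by
  unfold ov bloch
  fun_prop

theorem sphereInt_norm_sq_ov : sphereInt (fun Ω => ‖ov n Ω ψ‖ ^ 2) = ‖ψ‖ ^ 2 / (n + 1) := by
  simp_rw [ov_eq_eval_homogenizeOnLine, sphereInt_norm_sq_homogenizeOnLine,
    bombieriNormSq_majoranaPoly]

theorem sphereInt_norm_sq_ov_sq_le :
    sphereInt (fun Ω => (‖ov n Ω ψ‖ ^ 2) ^ 2) ≤ ‖ψ‖ ^ 4 / (2 * n + 1) := by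
  set Q := majoranaPoly n ψ
  have hQ : Q.natDegree ≤ n := natDegree_majoranaPoly_le ψ
  have hsq (Ω : ℝ × ℝ) : (‖ov n Ω ψ‖ ^ 2) ^ 2 =
      ‖(homogenizeOnLine (n + n) √Ω.1 √(1 - Ω.1) (Q * Q)).eval (cexp (I * Ω.2))‖ ^ 2 := by
    rw [homogenizeOnLine_mul _ _ hQ hQ, eval_mul, norm_mul, ov_eq_eval_homogenizeOnLine]
    ring
  calc _ = bombieriNormSq (n + n) (Q * Q) / ((n + n : ℕ) + 1) := by
        simp_rw [hsq, sphereInt_norm_sq_homogenizeOnLine]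
    _ ≤ bombieriNormSq n Q * bombieriNormSq n Q / ((n + n : ℕ) + 1) := by
        gcongr
        exact bombieriNormSq_mul_le hQ hQ
    _ = ‖ψ‖ ^ 4 / (2 * n + 1) := by
        rw [bombieriNormSq_majoranaPoly]
        push_cast
        ring

end Overlap

section SphereInt

variable {f g : ℝ × ℝ → ℝ}

theorem continuous_sphereInt_integrand (hf : Continuous f) :
    Continuous fun p => (∫ φ in (0 : ℝ)..2 * π, f (p, φ)) / (2 * π) :=
  (intervalIntegral.continuous_parametric_intervalIntegral_of_continuous'
    (f := fun p φ => f (p, φ)) hf _ _).div_const _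

theorem sphereInt_mono (hf : Continuous f) (hg : Continuous g) (hfg : f ≤ g) :
    sphereInt f ≤ sphereInt g := by
  refine intervalIntegral.integral_mono_on zero_le_one
    ((continuous_sphereInt_integrand hf).intervalIntegrable _ _)
    ((continuous_sphereInt_integrand hg).intervalIntegrable _ _) fun p _ => ?_
  gcongr
  exact intervalIntegral.integral_mono_on (by positivity)
    ((by fun_prop : Continuous fun φ => f (p, φ)).intervalIntegrable _ _)
    ((by fun_prop : Continuous fun φ => g (p, φ)).intervalIntegrable _ _) fun φ _ => hfg _

theorem sphereInt_sub (hf : Continuous f) (hg : Continuous g) :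
    sphereInt (fun Ω => f Ω - g Ω) = sphereInt f - sphereInt g := by
  rw [sphereInt, sphereInt, sphereInt, ← intervalIntegral.integral_sub
    ((continuous_sphereInt_integrand hf).intervalIntegrable _ _)
    ((continuous_sphereInt_integrand hg).intervalIntegrable _ _)]
  refine intervalIntegral.integral_congr fun p _ => ?_
  rw [intervalIntegral.integral_sub
    ((by fun_prop : Continuous fun φ => f (p, φ)).intervalIntegrable _ _)
    ((by fun_prop : Continuous fun φ => g (p, φ)).intervalIntegrable _ _), sub_div]

theorem sphereInt_const_mul (c : ℝ) (f : ℝ × ℝ → ℝ) :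
    sphereInt (fun Ω => c * f Ω) = c * sphereInt f := by
  simp only [sphereInt, intervalIntegral.integral_const_mul, mul_div_assoc]

end SphereInt

theorem sphereInt_mul_log_le {F : ℝ × ℝ → ℝ} (hF : Continuous F) (hF₀ : ∀ Ω, 0 ≤ F Ω) {a b : ℝ}
    (ha : 0 < a) (hb : 0 < b) (hFa : sphereInt F = a) (hFb : sphereInt (fun Ω => F Ω ^ 2) ≤ b) :
    sphereInt (fun Ω => F Ω * Real.log (F Ω)) ≤ a * Real.log (b / a) := by
  set t := b / a
  have ht : 0 < t := by positivity
  have htangent (x : ℝ) (hx : 0 ≤ x) : x * Real.log x ≤ t⁻¹ * x ^ 2 - (1 - Real.log t) * x := by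
    rcases hx.eq_or_lt with rfl | hx
    · simp
    have hlog := Real.log_le_sub_one_of_pos (div_pos hx ht)
    rw [Real.log_div hx.ne' ht.ne'] at hlog
    have hmul := mul_le_mul_of_nonneg_left hlog hx.le
    rw [div_eq_inv_mul] at hmul
    linarith
  calc sphereInt (fun Ω => F Ω * Real.log (F Ω))
      ≤ sphereInt (fun Ω => t⁻¹ * F Ω ^ 2 - (1 - Real.log t) * F Ω) :=
        sphereInt_mono (Real.continuous_mul_log.comp hF) (by fun_prop) fun Ω => htangent _ (hF₀ Ω)
    _ = t⁻¹ * sphereInt (fun Ω => F Ω ^ 2) - (1 - Real.log t) * a := by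
        rw [sphereInt_sub (by fun_prop) (by fun_prop), sphereInt_const_mul, sphereInt_const_mul,
          hFa]
    _ ≤ t⁻¹ * b - (1 - Real.log t) * a := by gcongr
    _ = a * Real.log t := by
        rw [show b = t * a by simp [t, ha.ne']]
        field_simp
        ring

/-- Crude lower bound on the Wehrl entropy:
`S_W(ψ) ≥ ln((2n+1)/(n+1))`, which is positive for `n ≥ 1`. -/
theorem wehrl_lower_bound (n : ℕ) (ψ : EuclideanSpace ℂ (Fin (n + 1))) (hψ : ‖ψ‖ = 1) :
    Real.log ((2 * (n : ℝ) + 1) / ((n : ℝ) + 1)) ≤ wehrl n ψ ∧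
      (1 ≤ n → 0 < Real.log ((2 * (n : ℝ) + 1) / ((n : ℝ) + 1))) := by
  have hn : (0 : ℝ) < n + 1 := by positivity
  refine ⟨?_, fun h1 => Real.log_pos ((one_lt_div hn).2 ?_)⟩
  · have hentropy := sphereInt_mul_log_le (F := fun Ω => ‖ov n Ω ψ‖ ^ 2)
      ((continuous_ov ψ).norm.pow 2) (fun _ => by positivity)
      (by positivity : (0 : ℝ) < 1 / (n + 1)) (by positivity : (0 : ℝ) < 1 / (2 * n + 1))
      (by rw [sphereInt_norm_sq_ov, hψ, one_pow])
      (by simpa [hψ] using sphereInt_norm_sq_ov_sq_le ψ)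
    have hratio : 1 / (2 * n + 1) / (1 / (n + 1)) = ((2 * n + 1) / (n + 1) : ℝ)⁻¹ := by
      field_simp
    rw [wehrl]
    calc Real.log ((2 * n + 1) / (n + 1))
        = -(n + 1) * (1 / (n + 1) * Real.log (1 / (2 * n + 1) / (1 / (n + 1)))) := by
          rw [hratio, Real.log_inv]
          field_simp
      _ ≤ _ := mul_le_mul_of_nonpos_left hentropy (by linarith)
  · linarith [(Nat.one_le_cast.2 h1 : (1 : ℝ) ≤ n)]
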